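/- arXiv:2411.06690 — 4 statements merged into one kernel-verified Lean document; each statement's English description precedes it below -/
import Mathlib

section
/- The function A(θ) = cos((π/2)·cos θ)/sin θ is strictly monotonically increasing on (0, π/2). -/
/-!
Writing `c = cos θ ∈ (0, 1)`, the numerator of the derivative of
`cos (π/2 · cos θ) / sin θ` is `π/2 · (1 - c²) · sin (π c/2) - c · cos (π c/2)`.
Jordan's inequality `sin (π c/2) ≥ c` together with
`cos (π c/2) = sin (π/2 · (1 - c)) < π/2 · (1 - c)` bounds it below by
`π/2 · c² (1 - c) > 0`.
-/

open Real Set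

namespace Real

lemma le_sin_pi_div_two_mul {c : ℝ} (hc₀ : 0 ≤ c) (hc₁ : c ≤ 1) :
    c ≤ sin (π / 2 * c) := by
  have h := mul_le_sin (x := π / 2 * c) (by positivity) (by nlinarith [pi_pos])
  rwa [← mul_assoc, div_mul_div_cancel₀ (by positivity), div_self two_ne_zero, one_mul] at h

lemma cos_pi_div_two_mul_lt {c : ℝ} (hc : c < 1) : cos (π / 2 * c) < π / 2 * (1 - c) := by
  have h := sin_lt (x := π / 2 - π / 2 * c) (by nlinarith [pi_pos])
  rw [sin_pi_div_two_sub] at h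
  linarith

lemma pi_div_two_mul_one_sub_sq_mul_sin_sub_mul_cos_pos {c : ℝ} (hc₀ : 0 < c) (hc₁ : c < 1) :
    0 < π / 2 * (1 - c ^ 2) * sin (π / 2 * c) - c * cos (π / 2 * c) := by
  have hsin := le_sin_pi_div_two_mul hc₀.le hc₁.le
  have hcos := cos_pi_div_two_mul_lt hc₁
  have hfac : 0 ≤ π / 2 * (1 - c ^ 2) := mul_nonneg (by positivity) (by nlinarith)
  calc 0 < π / 2 * c ^ 2 * (1 - c) := by have := pi_pos; positivity
    _ = π / 2 * (1 - c ^ 2) * c - c * (π / 2 * (1 - c)) := by ring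
    _ < π / 2 * (1 - c ^ 2) * sin (π / 2 * c) - c * cos (π / 2 * c) := by
      nlinarith [mul_le_mul_of_nonneg_left hsin hfac, mul_lt_mul_of_pos_left hcos hc₀]

lemma hasDerivAt_cos_pi_div_two_mul_cos_div_sin {θ : ℝ} (hθ : sin θ ≠ 0) :
    HasDerivAt (fun θ => cos (π / 2 * cos θ) / sin θ)
      ((π / 2 * sin θ ^ 2 * sin (π / 2 * cos θ) - cos θ * cos (π / 2 * cos θ)) / sin θ ^ 2)
      θ :=
  ((((hasDerivAt_cos θ).const_mul (π / 2)).cos).div (hasDerivAt_sin θ) hθ).congr_deriv (by ring)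

end Real

theorem dipole_pattern_strictMonoOn :
    StrictMonoOn (fun θ : ℝ => Real.cos (π/2 * Real.cos θ) / Real.sin θ)
      (Ioo (0:ℝ) (π/2)) := by
  have hsin : ∀ θ ∈ Ioo (0:ℝ) (π/2), 0 < sin θ := fun θ hθ =>
    sin_pos_of_pos_of_lt_pi hθ.1 (hθ.2.trans (by linarith [pi_pos]))
  have hderiv (θ : ℝ) (hθ : θ ∈ Ioo (0:ℝ) (π/2)) :=
    hasDerivAt_cos_pi_div_two_mul_cos_div_sin (hsin θ hθ).ne'
  refine strictMonoOn_of_deriv_pos (convex_Ioo _ _)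
    (fun θ hθ => (hderiv θ hθ).continuousAt.continuousWithinAt) fun θ hθ => ?_
  rw [interior_Ioo] at hθ
  have hcos₀ : 0 < cos θ := cos_pos_of_mem_Ioo ⟨by linarith [hθ.1, pi_pos], hθ.2⟩
  have hcos₁ : cos θ < 1 := by nlinarith [sin_sq_add_cos_sq θ, hsin θ hθ]
  rw [(hderiv θ hθ).deriv]
  refine div_pos ?_ (pow_pos (hsin θ hθ) 2)
  rw [sin_sq]
  exact pi_div_two_mul_one_sub_sq_mul_sin_sub_mul_cos_pos hcos₀ hcos₁
end

section
/- The function A(θ) = cos((π/2)·cos θ)/sin θ is strictly monotonically decreasing on (π/2, π). -/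
/-!
With `t = -cos θ`, which increases from `0` to `1` on `(π/2, π)`, the numerator of the derivative
of `cos (π/2 · cos θ) / sin θ` is `t cos (πt/2) - (π/2)(1 - t²) sin (πt/2)`. Jordan's inequality
`t ≤ sin (πt/2)` and `cos (πt/2) = sin (π(1-t)/2) ≤ π(1-t)/2` bound it by
`(π/2) t (1 - t) (1 - (1 + t)) < 0`.
-/

open Real Set

noncomputable def dipolePattern (θ : ℝ) : ℝ := cos (π / 2 * cos θ) / sin θ

lemma cos_pi_div_two_mul_le {t : ℝ} (ht : t ≤ 1) : cos (π / 2 * t) ≤ π / 2 * (1 - t) := by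
  rw [← sin_pi_div_two_sub, ← mul_one_sub]
  exact sin_le (mul_nonneg pi_div_two_pos.le (by linarith))

lemma mul_cos_pi_div_two_mul_lt {t : ℝ} (ht₀ : 0 < t) (ht₁ : t < 1) :
    t * cos (π / 2 * t) < π / 2 * (1 - t ^ 2) * sin (π / 2 * t) :=
  calc t * cos (π / 2 * t) ≤ t * (π / 2 * (1 - t)) :=
        mul_le_mul_of_nonneg_left (cos_pi_div_two_mul_le ht₁.le) ht₀.le
    _ < π / 2 * (1 - t ^ 2) * t := by
        have : 0 < π / 2 * (1 - t) * t * t := by have := sub_pos.2 ht₁; positivity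
        linarith
    _ ≤ π / 2 * (1 - t ^ 2) * sin (π / 2 * t) :=
        mul_le_mul_of_nonneg_left (le_sin_mul ht₀.le ht₁.le)
          (mul_nonneg pi_div_two_pos.le (by nlinarith))

lemma hasDerivAt_dipolePattern {θ : ℝ} (hθ : sin θ ≠ 0) :
    HasDerivAt dipolePattern
      ((π / 2 * sin (π / 2 * cos θ) * sin θ ^ 2 - cos (π / 2 * cos θ) * cos θ) / sin θ ^ 2) θ := by
  have hnum : HasDerivAt (fun x => cos (π / 2 * cos x))
      (-sin (π / 2 * cos θ) * (π / 2 * -sin θ)) θ :=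
    (hasDerivAt_cos _).comp θ ((hasDerivAt_cos θ).const_mul (π / 2))
  exact (hnum.div (hasDerivAt_sin θ) hθ).congr_deriv (by ring)

lemma dipolePattern_deriv_numerator_neg {θ : ℝ} (hθ : θ ∈ Ioo (π / 2) π) :
    π / 2 * sin (π / 2 * cos θ) * sin θ ^ 2 - cos (π / 2 * cos θ) * cos θ < 0 := by
  obtain ⟨hθ₁, hθ₂⟩ := hθ
  have hcos : cos θ < 0 := cos_neg_of_pi_div_two_lt_of_lt hθ₁ (by linarith [pi_pos])
  have hsin : 0 < sin θ := sin_pos_of_pos_of_lt_pi (by linarith [pi_pos]) hθ₂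
  have hcos' : -1 < cos θ := by nlinarith [sin_sq_add_cos_sq θ]
  have key := mul_cos_pi_div_two_mul_lt (t := -cos θ) (by linarith) (by linarith)
  rw [mul_neg, sin_neg, cos_neg, neg_sq] at key
  rw [sin_sq]
  linarith

theorem dipole_pattern_strictAntiOn :
    StrictAntiOn (fun θ : ℝ => Real.cos (π/2 * Real.cos θ) / Real.sin θ)
      (Ioo (π/2) π) := by
  have hsin : ∀ θ ∈ Ioo (π / 2) π, 0 < sin θ := fun θ hθ =>
    sin_pos_of_pos_of_lt_pi (by linarith [pi_pos, hθ.1]) hθ.2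
  refine strictAntiOn_of_deriv_neg (f := dipolePattern) (convex_Ioo _ _)
    (fun θ hθ => (hasDerivAt_dipolePattern (hsin θ hθ).ne').continuousAt.continuousWithinAt) ?_
  rw [interior_Ioo]
  intro θ hθ
  rw [(hasDerivAt_dipolePattern (hsin θ hθ).ne').deriv]
  exact div_neg_of_neg_of_pos (dipolePattern_deriv_numerator_neg hθ) (pow_pos (hsin θ hθ) 2)
end

section
/- For εᵣ > 1 and θ ∈ [0, π/2], the reflection coefficients satisfy Γ⊥(θ)² ≥ Γ∥(θ)², i.e., the vertically polarized component is reflected at least as strongly as the horizontally polarized component. -/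
open Real Set

theorem gamma_perp_sq_ge_parallel_sq (εr : ℝ) (hε : 1 < εr) :
    ∀ θ ∈ Icc (0:ℝ) (π/2),
      ((Real.sqrt (εr - 1 + (Real.cos θ)^2) - εr * Real.cos θ) /
        (Real.sqrt (εr - 1 + (Real.cos θ)^2) + εr * Real.cos θ))^2 ≤
      ((Real.sqrt (εr - 1 + (Real.cos θ)^2) - Real.cos θ) /
        (Real.sqrt (εr - 1 + (Real.cos θ)^2) + Real.cos θ))^2 := by
  rintro θ ⟨h0, h1⟩
  set c := Real.cos θ with hc
  have hc0 : 0 ≤ c := Real.cos_nonneg_of_mem_Icc ⟨by linarith [Real.pi_pos], h1⟩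
  have hc1 : c ≤ 1 := Real.cos_le_one θ
  set s := Real.sqrt (εr - 1 + c^2) with hs
  have hsq : s^2 = εr - 1 + c^2 := Real.sq_sqrt (by nlinarith)
  have hspos : 0 < s := Real.sqrt_pos.mpr (by nlinarith)
  have hd1 : 0 < s + εr * c := by nlinarith
  have hd2 : 0 < s + c := by linarith
  rw [div_pow, div_pow, div_le_div_iff₀ (by positivity) (by positivity)]
  have key : 0 ≤ s^2 - εr * c^2 := by rw [hsq]; nlinarith [mul_nonneg (sub_nonneg.mpr hε.le) (by nlinarith : (0:ℝ) ≤ 1 - c^2)]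
  nlinarith [mul_nonneg (mul_nonneg (mul_nonneg hspos.le hc0) (sub_nonneg.mpr hε.le)) key]
end

section
/- For β = 2π/λ with λ > 0 and θ ∈ (0, π), so that sin θ ≠ 0, the integral ∫_{−λ/4}^{λ/4} sin(β(λ/4 − |z|)) e^{−jβz cos θ} dz equals (2/β) · cos((π/2)·cos θ)/sin²θ. -/
open Real Set

lemma dipole_aux_hasDerivAt (β a t : ℝ) (μ A B : ℂ)
    (h1 : μ * A - (t : ℂ) * (β : ℂ) * B = 1) (h2 : μ * B + (t : ℂ) * (β : ℂ) * A = 0) (z : ℝ) :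
    HasDerivAt (fun z : ℝ => Complex.exp (μ * z) *
      (A * (Real.sin (β * (a + t * z)) : ℂ) + B * (Real.cos (β * (a + t * z)) : ℂ)))
      ((Real.sin (β * (a + t * z)) : ℂ) * Complex.exp (μ * z)) z := by
  have hexp : HasDerivAt (fun z : ℝ => Complex.exp (μ * z)) (Complex.exp (μ * z) * μ) z := by
    have h : HasDerivAt (fun z : ℝ => μ * (z : ℂ)) μ z := by
      simpa using ((hasDerivAt_id (z : ℂ)).const_mul μ).comp_ofReal
    exact h.cexp
  have hinner : HasDerivAt (fun z : ℝ => β * (a + t * z)) (β * t) z := by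
    have : HasDerivAt (fun z : ℝ => a + t * z) t z := by
      simpa using ((hasDerivAt_id z).const_mul t).const_add a
    simpa using this.const_mul β
  have hsin : HasDerivAt (fun z : ℝ => ((Real.sin (β * (a + t * z)) : ℝ) : ℂ))
      ((Real.cos (β * (a + t * z)) * (β * t) : ℝ) : ℂ) z :=
    (((Real.hasDerivAt_sin _).comp z hinner)).ofReal_comp
  have hcos : HasDerivAt (fun z : ℝ => ((Real.cos (β * (a + t * z)) : ℝ) : ℂ))
      ((-Real.sin (β * (a + t * z)) * (β * t) : ℝ) : ℂ) z :=
    (((Real.hasDerivAt_cos _).comp z hinner)).ofReal_comp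
  have := hexp.mul ((hsin.const_mul A).add (hcos.const_mul B))
  refine this.congr_deriv ?_
  symm
  simp only [Pi.add_apply]
  simp only [Complex.ofReal_mul, Complex.ofReal_neg]
  set S := ((Real.sin (β * (a + t * z)) : ℝ) : ℂ)
  set C := ((Real.cos (β * (a + t * z)) : ℝ) : ℂ)
  set E := Complex.exp (μ * (z : ℂ))
  linear_combination (-(E * S)) * h1 + (-(E * C)) * h2

theorem dipole_radiation_integral (L : ℝ) (hL : 0 < L) (β : ℝ) (hβ : β = 2 * π / L)
    (θ : ℝ) (hθ : θ ∈ Ioo (0:ℝ) π) :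
    ∫ z in (-(L/4))..(L/4),
        (Real.sin (β * (L/4 - |z|)) : ℂ) * Complex.exp (-Complex.I * β * z * Real.cos θ)
      = ((2 / β) * Real.cos (π/2 * Real.cos θ) / (Real.sin θ)^2 : ℝ) := by
  obtain ⟨hθ0, hθπ⟩ := hθ
  have hs : Real.sin θ ≠ 0 := ne_of_gt (Real.sin_pos_of_pos_of_lt_pi hθ0 hθπ)
  have hβpos : 0 < β := by rw [hβ]; positivity
  have hβ0 : β ≠ 0 := ne_of_gt hβpos
  set a : ℝ := L / 4 with ha
  have hapos : 0 < a := by positivity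
  have ha4 : β * a = π / 2 := by
    rw [hβ, ha]; field_simp; ring
  set c := Real.cos θ with hc
  set s := Real.sin θ with hsdef
  set μ : ℂ := -Complex.I * β * c with hμ
  set D : ℂ := (β : ℂ) ^ 2 * (s : ℂ) ^ 2 with hD
  have hpyth : (s : ℂ) ^ 2 + (c : ℂ) ^ 2 = 1 := by
    rw [hsdef, hc]
    exact_mod_cast Real.sin_sq_add_cos_sq θ
  have hDalt : μ ^ 2 + (β : ℂ) ^ 2 = D := by
    rw [hμ, hD]
    linear_combination (-(β : ℂ) ^ 2) * hpyth + ((β : ℂ) ^ 2 * (c : ℂ) ^ 2) * Complex.I_sq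
  have hD0 : D ≠ 0 := by
    rw [hD]
    apply mul_ne_zero <;> apply pow_ne_zero <;> simp [hβ0, hs]
  -- conditions for left piece (t = 1), A = μ/D, B = -β/D
  have hL1 : μ * (μ / D) - ((1 : ℝ) : ℂ) * (β : ℂ) * (-(β : ℂ) / D) = 1 := by
    field_simp
    push_cast
    linear_combination hDalt
  have hL2 : μ * (-(β : ℂ) / D) + ((1 : ℝ) : ℂ) * (β : ℂ) * (μ / D) = 0 := by
    field_simp
    simp
  -- conditions for right piece (t = -1), A = μ/D, B = β/D
  have hR1 : μ * (μ / D) - ((-1 : ℝ) : ℂ) * (β : ℂ) * ((β : ℂ) / D) = 1 := by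
    field_simp
    push_cast
    linear_combination hDalt
  have hR2 : μ * ((β : ℂ) / D) + ((-1 : ℝ) : ℂ) * (β : ℂ) * (μ / D) = 0 := by
    field_simp
    simp
  have hcont : Continuous (fun z : ℝ =>
      (Real.sin (β * (a - |z|)) : ℂ) * Complex.exp (-Complex.I * β * z * c)) := by
    apply Continuous.mul
    · exact Complex.continuous_ofReal.comp (Real.continuous_sin.comp
        (continuous_const.mul (continuous_const.sub continuous_abs)))
    · exact Complex.continuous_exp.comp
        ((continuous_const.mul Complex.continuous_ofReal).mul continuous_const)
  have hcontL : Continuous (fun z : ℝ =>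
      (Real.sin (β * (a + 1 * z)) : ℂ) * Complex.exp (μ * z)) := by
    apply Continuous.mul
    · exact Complex.continuous_ofReal.comp (Real.continuous_sin.comp (by fun_prop))
    · exact Complex.continuous_exp.comp (continuous_const.mul Complex.continuous_ofReal)
  have hcontR : Continuous (fun z : ℝ =>
      (Real.sin (β * (a + (-1) * z)) : ℂ) * Complex.exp (μ * z)) := by
    apply Continuous.mul
    · exact Complex.continuous_ofReal.comp (Real.continuous_sin.comp (by fun_prop))
    · exact Complex.continuous_exp.comp (continuous_const.mul Complex.continuous_ofReal)
  -- left piece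
  have hleft : (∫ z in (-a)..(0:ℝ),
      (Real.sin (β * (a - |z|)) : ℂ) * Complex.exp (-Complex.I * β * z * c))
      = μ / D + Complex.exp (μ * (-a : ℝ)) * ((β : ℂ) / D) := by
    have hcongr : EqOn (fun z : ℝ =>
        (Real.sin (β * (a - |z|)) : ℂ) * Complex.exp (-Complex.I * β * z * c))
        (fun z : ℝ => (Real.sin (β * (a + 1 * z)) : ℂ) * Complex.exp (μ * z))
        (uIcc (-a) (0:ℝ)) := by
      intro z hz
      rw [uIcc_of_le (by linarith)] at hz
      have hz0 : z ≤ 0 := hz.2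
      have habs : |z| = -z := abs_of_nonpos hz0
      simp only [habs]
      rw [hμ]
      ring_nf
    rw [intervalIntegral.integral_congr hcongr]
    have := intervalIntegral.integral_eq_sub_of_hasDerivAt
      (f := fun z : ℝ => Complex.exp (μ * z) *
        ((μ / D) * (Real.sin (β * (a + 1 * z)) : ℂ) + (-(β : ℂ) / D) * (Real.cos (β * (a + 1 * z)) : ℂ)))
      (f' := fun z : ℝ => (Real.sin (β * (a + 1 * z)) : ℂ) * Complex.exp (μ * z))
      (a := -a) (b := 0)
      (fun x _ => dipole_aux_hasDerivAt β a 1 μ (μ / D) (-(β : ℂ) / D) hL1 hL2 x)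
      (hcontL.intervalIntegrable _ _)
    rw [this]
    simp only [one_mul, neg_one_mul, mul_zero, add_zero, add_neg_cancel,
      Complex.ofReal_zero, Complex.ofReal_neg, Complex.exp_zero, ha4,
      Real.sin_pi_div_two, Real.cos_pi_div_two, Real.sin_zero, Real.cos_zero,
      Complex.ofReal_one, mul_one, mul_neg, neg_neg]
    ring
  -- right piece
  have hright : (∫ z in (0:ℝ)..a,
      (Real.sin (β * (a - |z|)) : ℂ) * Complex.exp (-Complex.I * β * z * c))
      = Complex.exp (μ * (a : ℝ)) * ((β : ℂ) / D) - μ / D := by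
    have hcongr : EqOn (fun z : ℝ =>
        (Real.sin (β * (a - |z|)) : ℂ) * Complex.exp (-Complex.I * β * z * c))
        (fun z : ℝ => (Real.sin (β * (a + (-1) * z)) : ℂ) * Complex.exp (μ * z))
        (uIcc (0:ℝ) a) := by
      intro z hz
      rw [uIcc_of_le (by linarith)] at hz
      have hz0 : 0 ≤ z := hz.1
      have habs : |z| = z := abs_of_nonneg hz0
      simp only [habs]
      rw [hμ]
      ring_nf
    rw [intervalIntegral.integral_congr hcongr]
    have := intervalIntegral.integral_eq_sub_of_hasDerivAt
      (f := fun z : ℝ => Complex.exp (μ * z) *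
        ((μ / D) * (Real.sin (β * (a + (-1) * z)) : ℂ) + ((β : ℂ) / D) * (Real.cos (β * (a + (-1) * z)) : ℂ)))
      (f' := fun z : ℝ => (Real.sin (β * (a + (-1) * z)) : ℂ) * Complex.exp (μ * z))
      (a := 0) (b := a)
      (fun x _ => dipole_aux_hasDerivAt β a (-1) μ (μ / D) ((β : ℂ) / D) hR1 hR2 x)
      (hcontR.intervalIntegrable _ _)
    rw [this]
    simp only [one_mul, neg_one_mul, mul_zero, add_zero, add_neg_cancel,
      Complex.ofReal_zero, Complex.ofReal_neg, Complex.exp_zero, ha4,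
      Real.sin_pi_div_two, Real.cos_pi_div_two, Real.sin_zero, Real.cos_zero,
      Complex.ofReal_one, mul_one, mul_neg, neg_neg]
    ring
  have hsplit := intervalIntegral.integral_add_adjacent_intervals
    (a := -a) (b := 0) (c := a) (μ := MeasureTheory.volume)
    (f := fun z : ℝ => (Real.sin (β * (a - |z|)) : ℂ) * Complex.exp (-Complex.I * β * z * c))
    (hcont.intervalIntegrable _ _) (hcont.intervalIntegrable _ _)
  have key : (∫ z in (-a)..a,
      (Real.sin (β * (a - |z|)) : ℂ) * Complex.exp (-Complex.I * β * z * c))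
      = (Complex.exp (μ * (a : ℝ)) + Complex.exp (μ * (-a : ℝ))) * ((β : ℂ) / D) := by
    rw [← hsplit, hleft, hright]
    ring
  rw [key]
  -- now evaluate the exponentials
  have hba : ((β : ℂ)) * (a : ℂ) = (π : ℂ) / 2 := by
    exact_mod_cast congrArg (fun x : ℝ => (x : ℂ)) ha4
  have hμa : μ * (a : ℝ) = -(((π / 2 * c : ℝ)) : ℂ) * Complex.I := by
    rw [hμ]
    push_cast
    linear_combination (-Complex.I * (c : ℂ)) * hba
  have hμa' : μ * ((-a : ℝ) : ℂ) = (((π / 2 * c : ℝ)) : ℂ) * Complex.I := by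
    rw [hμ]
    push_cast
    linear_combination (Complex.I * (c : ℂ)) * hba
  rw [hμa, hμa']
  have hcosx : Complex.exp (-(((π / 2 * c : ℝ)) : ℂ) * Complex.I)
      + Complex.exp ((((π / 2 * c : ℝ)) : ℂ) * Complex.I)
      = 2 * ((Real.cos (π / 2 * c) : ℝ) : ℂ) := by
    rw [Complex.exp_mul_I, Complex.exp_mul_I, Complex.cos_neg, Complex.sin_neg,
      ← Complex.ofReal_cos]
    ring
  rw [hcosx]
  rw [hD]
  have hβC : (β : ℂ) ≠ 0 := Complex.ofReal_ne_zero.mpr hβ0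
  have hsC : (s : ℂ) ≠ 0 := Complex.ofReal_ne_zero.mpr hs
  push_cast
  field_simp
end
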